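/- The sequence of objective values f₀(x⁽ᵏ⁾) − g₀(x⁽ᵏ⁾) generated by the concave-convex procedure is nonincreasing; if additionally f₀ − g₀ is bounded below on the feasible set, then this sequence converges. -/
import Mathlib

open RealInnerProductSpace

lemma grad_ineq {E : Type*} [NormedAddCommGroup E] [InnerProductSpace ℝ E] [CompleteSpace E]
    {g : E → ℝ} {G : E} {x y : E} (hg : ConvexOn ℝ Set.univ g)
    (hG : HasGradientAt g G x) : g x + ⟪G, y - x⟫ ≤ g y := by
  have hfd : HasFDerivAt g (InnerProductSpace.toDual ℝ E G) x :=
    (hasGradientAt_iff_hasFDerivAt).1 hG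
  -- line map
  set A : ℝ →ᵃ[ℝ] E := AffineMap.lineMap x y with hA
  have hAval : ∀ t : ℝ, A t = x + t • (y - x) := by
    intro t; simp [hA, AffineMap.lineMap_apply, smul_sub]; abel
  have hφconv : ConvexOn ℝ Set.univ (g ∘ A) := by
    have := hg.comp_affineMap A
    simpa using this
  have hline : HasDerivAt A (y - x) (0 : ℝ) := by
    have : HasDerivAt (fun t : ℝ => x + t • (y - x)) (y - x) 0 := by
      simpa using ((hasDerivAt_id (0:ℝ)).smul_const (y - x)).const_add x
    refine this.congr_of_eventuallyEq ?_
    filter_upwards with t using hAval t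
  have hA0 : A 0 = x := by rw [hAval]; simp
  have hA1 : A 1 = y := by rw [hAval]; simp
  have hφd : HasDerivAt (g ∘ A) ⟪G, y - x⟫ 0 := by
    have := (hA0 ▸ hfd).comp_hasDerivAt 0 hline
    simpa [InnerProductSpace.toDual_apply_apply] using this
  have := hφconv.le_slope_of_hasDerivAt (Set.mem_univ (0:ℝ)) (Set.mem_univ (1:ℝ))
      one_pos hφd
  rw [slope_def_field] at this
  simp only [hA0, hA1, Function.comp_apply] at this
  have h2 : ⟪G, y - x⟫ ≤ g y - g x := by
    simpa [div_one] using this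
  linarith

theorem stmt_5 (n m : ℕ) (f g : ℕ → EuclideanSpace ℝ (Fin n) → ℝ)
    (G : ℕ → ℕ → EuclideanSpace ℝ (Fin n))
    (x : ℕ → EuclideanSpace ℝ (Fin n)) (B : ℝ)
    (hf : ∀ i ≤ m, ConvexOn ℝ Set.univ (f i))
    (hg : ∀ i ≤ m, ConvexOn ℝ Set.univ (g i))
    (hG : ∀ i ≤ m, ∀ k, HasGradientAt (g i) (G k i) (x k))
    -- x⁽⁰⁾ is feasible for the original DC problem
    (hfeas0 : ∀ i, 1 ≤ i → i ≤ m → f i (x 0) - g i (x 0) ≤ 0)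
    -- each x⁽ᵏ⁺¹⁾ is an optimal solution of the convexified subproblem at x⁽ᵏ⁾
    (hsubfeas : ∀ k, ∀ i, 1 ≤ i → i ≤ m →
      f i (x (k + 1)) - (g i (x k) + ⟪G k i, x (k + 1) - x k⟫) ≤ 0)
    (hopt : ∀ k, ∀ y, (∀ i, 1 ≤ i → i ≤ m →
        f i y - (g i (x k) + ⟪G k i, y - x k⟫) ≤ 0) →
      f 0 (x (k + 1)) - (g 0 (x k) + ⟪G k 0, x (k + 1) - x k⟫) ≤
        f 0 y - (g 0 (x k) + ⟪G k 0, y - x k⟫)) :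
    Antitone (fun k => f 0 (x k) - g 0 (x k)) ∧
      ((∀ y, (∀ i, 1 ≤ i → i ≤ m → f i y - g i y ≤ 0) →
          B ≤ f 0 y - g 0 y) →
        ∃ L, Filter.Tendsto (fun k => f 0 (x k) - g 0 (x k))
          Filter.atTop (nhds L)) := by
  -- feasibility of every iterate
  have feas : ∀ k, ∀ i, 1 ≤ i → i ≤ m → f i (x k) - g i (x k) ≤ 0 := by
    intro k
    induction k with
    | zero => exact hfeas0
    | succ k ih =>
      intro i h1 h2
      have hgi := grad_ineq (hg i h2) (hG i h2 k) (y := x (k+1))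
      have hsf := hsubfeas k i h1 h2
      linarith
  -- monotone step
  have step : ∀ k, f 0 (x (k+1)) - g 0 (x (k+1)) ≤ f 0 (x k) - g 0 (x k) := by
    intro k
    have hxkfeas : ∀ i, 1 ≤ i → i ≤ m →
        f i (x k) - (g i (x k) + ⟪G k i, x k - x k⟫) ≤ 0 := by
      intro i h1 h2
      have := feas k i h1 h2
      simpa using this
    have h1 := hopt k (x k) hxkfeas
    simp only [sub_self, inner_zero_right, add_zero] at h1
    have h2 := grad_ineq (hg 0 (Nat.zero_le m)) (hG 0 (Nat.zero_le m) k)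
        (y := x (k+1))
    linarith
  have hanti : Antitone (fun k => f 0 (x k) - g 0 (x k)) :=
    antitone_nat_of_succ_le step
  refine ⟨hanti, fun hB => ?_⟩
  have hbdd : BddBelow (Set.range fun k => f 0 (x k) - g 0 (x k)) := by
    refine ⟨B, ?_⟩
    rintro _ ⟨k, rfl⟩
    exact hB (x k) (feas k)
  exact ⟨_, tendsto_atTop_ciInf hanti hbdd⟩
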